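/- Under the assumptions of the per-step lemma (α-exp-concave losses f_t with gradient bound G on a convex set of diameter D, η = (1/2)min{α, 1/(4GD)}, ε = 1/(η²D²), and the regularized Newton-step updates w_{t+1}), the regret ∑_{t=1}^T ( f_t(w_t) + λr(w_t) − f_t(w_*) − λr(w_*) ) ≤ C·log T + C' for constants C, C' depending only on n, α, G, D, λ, and sup_B r, for every w_* ∈ B and all T ≥ 1. -/

import Mathlib

/-
Exp-concavity turns into the quadratic bound `f_t(w_t) - f_t(x) ≤ a - (η/2) a²`, where
`a = ⟨g_t, w_t - x⟩`, as long as `2η ≤ α` and `|2η a| ≤ 1/4`; first-order optimality of the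
proximal step bounds `λ r(w_{t+1}) - λ r(x)` by
`⟨g_t, x - w_{t+1}⟩ + η ⟨w_{t+1} - w_t, A_t (x - w_{t+1})⟩`.
Since `A_t = A_{t-1} + g_t g_tᵀ`, adding the two bounds and completing the square shows that the
regret of step `t` (with `r` read at `w_{t+1}`) is at most the decrease of the potential
`(η/2)‖x - w_{t+1}‖²_{A_t} - log det A_t / (2η)` plus `g_tᵀ A_t⁻¹ g_t / (2η)`, and the matrix
determinant lemma gives `g_tᵀ A_t⁻¹ g_t ≤ log det A_t - log det A_{t-1}`. Summing telescopes;
`r(w_1) = 0 ≤ r` absorbs the shift in `r`, and `det ≤ tr^n` gives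
`log det A_T ≤ n log ((nε + G²) T)`. When `G D = 0` the step size is `0`, every gradient is
orthogonal to `B - B`, and each step has nonpositive regret.
-/

open Matrix Finset Filter

namespace Real

theorem log_one_add_le_sub_sq_div_four {u : ℝ} (hu : |u| ≤ 1 / 4) :
    log (1 + u) ≤ u - u ^ 2 / 4 := by
  obtain ⟨hu₁, hu₂⟩ := abs_le.1 hu
  set x := (u - u ^ 2 / 4) / 4 with hx_def
  have hx : 0 ≤ 1 + x := by rw [hx_def]; nlinarith
  -- `log (1 + u) ≤ 4 x` because `1 + u ≤ (1 + x) ^ 4 ≤ exp x ^ 4`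
  have hpoly : 1 + u ≤ (1 + x) ^ 4 := by
    rw [hx_def]
    nlinarith [sq_nonneg u, sq_nonneg (u * (4 - u)), sq_nonneg (u ^ 2),
      mul_nonneg (by linarith : (0:ℝ) ≤ 1/4 + u) (by linarith : (0:ℝ) ≤ 1/4 - u),
      sq_nonneg (u * (1 + u)), sq_nonneg (u * (1 - u))]
  rw [log_le_iff_le_exp (by linarith)]
  calc 1 + u ≤ (1 + x) ^ 4 := hpoly
    _ ≤ exp x ^ 4 := by gcongr; linarith [add_one_le_exp x]
    _ = exp (u - u ^ 2 / 4) := by rw [← exp_nat_mul]; congr 1; ring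

theorem log_one_add_mul_div_le_of_le {a α β : ℝ} (hβ : 0 < β) (hβα : β ≤ α)
    (ha : 0 < 1 + α * a) : log (1 + α * a) / α ≤ log (1 + β * a) / β := by
  have hα : 0 < α := hβ.trans_le hβα
  have hbern : (1 + α * a) ^ (β / α) ≤ 1 + β * a := by
    have := rpow_one_add_le_one_add_mul_self (by linarith : -1 ≤ α * a)
      (div_nonneg hβ.le hα.le) ((div_le_one hα).2 hβα)
    rwa [show β / α * (α * a) = β * a by field_simp] at this
  have hlog := log_le_log (rpow_pos_of_pos ha _) hbern
  rw [log_rpow ha] at hlog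
  rw [div_le_div_iff₀ hα hβ]
  calc log (1 + α * a) * β = β / α * log (1 + α * a) * α := by field_simp
    _ ≤ log (1 + β * a) * α := by gcongr

end Real

theorem ConcaveOn.le_add_of_hasFDerivAt {E : Type*} [NormedAddCommGroup E] [NormedSpace ℝ E]
    {B : Set E} {h : E → ℝ} (hc : ConcaveOn ℝ B h) {x y : E} (hx : x ∈ B) (hy : y ∈ B)
    {L : E →L[ℝ] ℝ} (hL : HasFDerivAt h L y) : h x ≤ h y + L (x - y) := by
  have hline : ConcaveOn ℝ (AffineMap.lineMap y x ⁻¹' B) (h ∘ AffineMap.lineMap y x) :=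
    hc.comp_affineMap _
  have hderiv : HasDerivAt (h ∘ AffineMap.lineMap y x) (L (x - y)) (0 : ℝ) := by
    have hL0 : HasFDerivAt h L (AffineMap.lineMap y x (0 : ℝ)) := by simpa using hL
    exact hL0.comp_hasDerivAt 0 AffineMap.hasDerivAt_lineMap
  have := hline.slope_le_of_hasDerivAt (x := 0) (y := 1) (by simpa using hy) (by simpa using hx)
    one_pos hderiv
  simpa [slope_def_field, map_sub, add_comm] using this

def ExpConcaveOn {E : Type*} [AddCommGroup E] [Module ℝ E] (α : ℝ) (B : Set E) (f : E → ℝ) : Prop :=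
  ConcaveOn ℝ B fun x => Real.exp (-α * f x)

namespace ExpConcaveOn

variable {E : Type*} [NormedAddCommGroup E] [NormedSpace ℝ E] {α : ℝ} {B : Set E} {f : E → ℝ}
  {x y : E} {L : E →L[ℝ] ℝ}

theorem sub_le_log (hf : ExpConcaveOn α B f) (hα : 0 < α) (hx : x ∈ B) (hy : y ∈ B)
    (hL : HasFDerivAt f L y) :
    0 < 1 + α * L (y - x) ∧ f y - f x ≤ Real.log (1 + α * L (y - x)) / α := by
  have hexp : HasFDerivAt (fun z => Real.exp (-α * f z))
      (Real.exp (-α * f y) • (-α) • L) y := (hL.const_mul (-α)).exp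
  have htan := hf.le_add_of_hasFDerivAt hx hy hexp
  have hneg : L (x - y) = -L (y - x) := by rw [← map_neg, neg_sub]
  simp only [_root_.smul_apply, smul_eq_mul, hneg] at htan
  have hpos : 0 < 1 + α * L (y - x) := by
    by_contra hc
    nlinarith [Real.exp_pos (-α * f x), Real.exp_pos (-α * f y)]
  refine ⟨hpos, ?_⟩
  have hlog := Real.log_le_log (Real.exp_pos _)
    (htan.trans_eq (by ring : _ = Real.exp (-α * f y) * (1 + α * L (y - x))))
  rw [Real.log_exp, Real.log_mul (Real.exp_pos _).ne' hpos.ne', Real.log_exp] at hlog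
  rw [le_div_iff₀ hα]
  linarith

theorem sub_le (hf : ExpConcaveOn α B f) (hα : 0 < α) (hx : x ∈ B) (hy : y ∈ B)
    (hL : HasFDerivAt f L y) : f y - f x ≤ L (y - x) := by
  obtain ⟨hpos, hle⟩ := hf.sub_le_log hα hx hy hL
  calc f y - f x ≤ Real.log (1 + α * L (y - x)) / α := hle
    _ ≤ L (y - x) := by
      rw [div_le_iff₀ hα]
      linarith [Real.log_le_sub_one_of_pos hpos]

theorem sub_le_sub_sq (hf : ExpConcaveOn α B f) {β : ℝ} (hβ : 0 < β) (hβα : β ≤ α)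
    (hx : x ∈ B) (hy : y ∈ B) (hL : HasFDerivAt f L y) (hsmall : |β * L (y - x)| ≤ 1 / 4) :
    f y - f x ≤ L (y - x) - β / 4 * L (y - x) ^ 2 := by
  obtain ⟨hpos, hle⟩ := hf.sub_le_log (hβ.trans_le hβα) hx hy hL
  calc f y - f x ≤ Real.log (1 + α * L (y - x)) / α := hle
    _ ≤ Real.log (1 + β * L (y - x)) / β := Real.log_one_add_mul_div_le_of_le hβ hβα hpos
    _ ≤ L (y - x) - β / 4 * L (y - x) ^ 2 := by
      rw [div_le_iff₀ hβ]
      nlinarith [Real.log_one_add_le_sub_sq_div_four hsmall]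

end ExpConcaveOn

theorem abs_dotProduct_le_of_sqrt_le {ι : Type*} [Fintype ι] {u v : ι → ℝ} {a b : ℝ}
    (hu : √(u ⬝ᵥ u) ≤ a) (hv : √(v ⬝ᵥ v) ≤ b) : |u ⬝ᵥ v| ≤ a * b := by
  have hcs : (u ⬝ᵥ v) ^ 2 ≤ (u ⬝ᵥ u) * (v ⬝ᵥ v) := by
    simpa [dotProduct, sq] using sum_mul_sq_le_sq_mul_sq univ u v
  have hu0 : 0 ≤ u ⬝ᵥ u := by simpa using dotProduct_star_self_nonneg u
  calc |u ⬝ᵥ v| = √((u ⬝ᵥ v) ^ 2) := (Real.sqrt_sq_eq_abs _).symm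
    _ ≤ √((u ⬝ᵥ u) * (v ⬝ᵥ v)) := Real.sqrt_le_sqrt hcs
    _ = √(u ⬝ᵥ u) * √(v ⬝ᵥ v) := Real.sqrt_mul hu0 _
    _ ≤ a * b := mul_le_mul hu hv (Real.sqrt_nonneg _) ((Real.sqrt_nonneg _).trans hu)

theorem ConvexOn.le_add_of_isMinOn_add {E : Type*} [AddCommGroup E] [Module ℝ E] {B : Set E}
    {φ c : E → ℝ} (hc : ConvexOn ℝ B c) {p u : E} (hp : p ∈ B) (hu : u ∈ B)
    (hmin : IsMinOn (φ + c) B p) {ℓ k : ℝ}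
    (hφ : ∀ s : ℝ, φ (p + s • (u - p)) = φ p + s * ℓ + s ^ 2 * k) : c p ≤ c u + ℓ := by
  have hsegment : ∀ s ∈ Set.Ioo (0 : ℝ) 1, c p ≤ c u + ℓ + s * k := by
    rintro s ⟨hs₀, hs₁⟩
    have hcomb : (1 - s) • p + s • u = p + s • (u - p) := by
      rw [smul_sub, sub_smul, one_smul]; abel
    have hconv := hc.2 hp hu (sub_nonneg.2 hs₁.le) hs₀.le (sub_add_cancel 1 s)
    rw [hcomb, smul_eq_mul, smul_eq_mul] at hconv
    have hle := isMinOn_iff.1 hmin _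
      (hcomb ▸ hc.1 hp hu (sub_nonneg.2 hs₁.le) hs₀.le (sub_add_cancel 1 s))
    simp only [Pi.add_apply, hφ] at hle
    have : s * c p ≤ s * (c u + ℓ + s * k) := by nlinarith
    exact le_of_mul_le_mul_left this hs₀
  have hlim : Tendsto (fun s : ℝ => c u + ℓ + s * k) (nhdsWithin 0 (Set.Ioi 0))
      (nhds (c u + ℓ + 0 * k)) :=
    ((continuous_const.add (continuous_id.mul continuous_const)).tendsto 0).mono_left
      nhdsWithin_le_nhds
  rw [zero_mul, add_zero] at hlim
  exact ge_of_tendsto hlim (Filter.mem_of_superset (Ioo_mem_nhdsGT one_pos) hsegment)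

namespace Matrix

variable {ι : Type*} [Fintype ι]

theorem IsHermitian.dotProduct_mulVec_comm {M : Matrix ι ι ℝ} (hM : M.IsHermitian)
    (x y : ι → ℝ) : x ⬝ᵥ M *ᵥ y = y ⬝ᵥ M *ᵥ x := by
  rw [dotProduct_mulVec, ← mulVec_transpose, ← conjTranspose_eq_transpose_of_trivial, hM.eq,
    dotProduct_comm]

theorem IsHermitian.dotProduct_mulVec_add_smul {M : Matrix ι ι ℝ} (hM : M.IsHermitian)
    (x y : ι → ℝ) (c : ℝ) :
    (x + c • y) ⬝ᵥ M *ᵥ (x + c • y)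
      = x ⬝ᵥ M *ᵥ x + 2 * c * (x ⬝ᵥ M *ᵥ y) + c ^ 2 * (y ⬝ᵥ M *ᵥ y) := by
  simp only [mulVec_add, mulVec_smul, dotProduct_add, add_dotProduct, smul_dotProduct,
    dotProduct_smul, smul_eq_mul, hM.dotProduct_mulVec_comm y x]
  ring

theorem PosDef.add_vecMulVec_self {M : Matrix ι ι ℝ} (hM : M.PosDef) (g : ι → ℝ) :
    (M + vecMulVec g g).PosDef := by
  simpa using hM.add_posSemidef (posSemidef_vecMulVec_self_star g)

theorem posDef_of_succ_eq_add_vecMulVec {A : ℕ → Matrix ι ι ℝ} {v : ℕ → ι → ℝ}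
    (h₀ : (A 0).PosDef)
    (hA : ∀ s, A (s + 1) = A s + vecMulVec (v (s + 1)) (v (s + 1))) (t : ℕ) : (A t).PosDef := by
  induction t with
  | zero => exact h₀
  | succ t ih => exact hA t ▸ ih.add_vecMulVec_self _

variable [DecidableEq ι]

theorem PosDef.neg_dotProduct_sub_le {M : Matrix ι ι ℝ} (hM : M.PosDef) {η : ℝ} (hη : 0 < η)
    (g v : ι → ℝ) :
    -(g ⬝ᵥ v) - η / 2 * (v ⬝ᵥ M *ᵥ v) ≤ (g ⬝ᵥ M⁻¹ *ᵥ g) / (2 * η) := by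
  have hMc : M *ᵥ (M⁻¹ *ᵥ g) = g := by
    rw [mulVec_mulVec, mul_nonsing_inv _ hM.det_pos.ne'.isUnit, one_mulVec]
  -- complete the square: `0 ≤ (v + η⁻¹ M⁻¹ g)ᵀ M (v + η⁻¹ M⁻¹ g)`
  have hsq := hM.posSemidef.dotProduct_mulVec_nonneg (v + η⁻¹ • M⁻¹ *ᵥ g)
  rw [star_trivial, hM.isHermitian.dotProduct_mulVec_add_smul, hMc,
    dotProduct_comm v g, dotProduct_comm (M⁻¹ *ᵥ g) g] at hsq
  have hscaled := mul_nonneg (sq_nonneg η) hsq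
  have hexpand : η ^ 2 * (v ⬝ᵥ M *ᵥ v + 2 * η⁻¹ * (g ⬝ᵥ v) + η⁻¹ ^ 2 * (g ⬝ᵥ M⁻¹ *ᵥ g))
      = η ^ 2 * (v ⬝ᵥ M *ᵥ v) + 2 * η * (g ⬝ᵥ v) + g ⬝ᵥ M⁻¹ *ᵥ g := by
    field_simp
  rw [le_div_iff₀ (by positivity)]
  linarith

theorem det_add_vecMulVec {R : Type*} [CommRing R] {A : Matrix ι ι R} (hA : IsUnit A.det)
    (u v : ι → R) : (A + vecMulVec u v).det = A.det * (1 + v ⬝ᵥ A⁻¹ *ᵥ u) := by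
  rw [vecMulVec_eq Unit, det_add_replicateCol_mul_replicateRow hA,
    det_unique (1 + _ : Matrix Unit Unit R), add_apply, one_apply_eq, Matrix.mul_assoc,
    ← replicateCol_mulVec, replicateRow_mul_replicateCol_apply]

theorem PosDef.dotProduct_inv_mulVec_le_log_det_sub {M : Matrix ι ι ℝ} (hM : M.PosDef)
    (g : ι → ℝ) :
    g ⬝ᵥ (M + vecMulVec g g)⁻¹ *ᵥ g ≤ Real.log (M + vecMulVec g g).det - Real.log M.det := by
  set N := M + vecMulVec g g with hN_def
  have hN : N.PosDef := hM.add_vecMulVec_self g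
  have hdet : M.det = N.det * (1 - g ⬝ᵥ N⁻¹ *ᵥ g) := by
    have hM' : M = N + vecMulVec g (-g) := by
      rw [vecMulVec_neg, hN_def, add_neg_cancel_right]
    conv_lhs => rw [hM']
    rw [det_add_vecMulVec hN.det_pos.ne'.isUnit, neg_dotProduct, sub_eq_add_neg]
  have hratio : g ⬝ᵥ N⁻¹ *ᵥ g = 1 - M.det / N.det := by
    rw [hdet, mul_div_cancel_left₀ _ hN.det_pos.ne']
    ring
  rw [hratio]
  linarith [Real.log_le_sub_one_of_pos (div_pos hM.det_pos hN.det_pos),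
    Real.log_div hM.det_pos.ne' hN.det_pos.ne']

theorem PosSemidef.det_le_trace_pow {M : Matrix ι ι ℝ} (hM : M.PosSemidef) :
    M.det ≤ M.trace ^ Fintype.card ι := by
  rw [hM.isHermitian.det_eq_prod_eigenvalues, hM.isHermitian.trace_eq_sum_eigenvalues]
  simp only [RCLike.ofReal_real_eq_id, id]
  calc ∏ i, hM.isHermitian.eigenvalues i ≤ ∏ _i : ι, ∑ j, hM.isHermitian.eigenvalues j :=
        prod_le_prod (fun i _ => hM.eigenvalues_nonneg i)
          fun i _ => single_le_sum (fun j _ => hM.eigenvalues_nonneg j) (mem_univ i)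
    _ = (∑ j, hM.isHermitian.eigenvalues j) ^ Fintype.card ι := by
        rw [prod_const, card_univ]

theorem log_det_sub_le_of_succ_eq_add_vecMulVec {A : ℕ → Matrix ι ι ℝ} {v : ℕ → ι → ℝ}
    {ε G : ℝ} (hε : 0 < ε) (h₀ : A 0 = ε • 1)
    (hA : ∀ s, A (s + 1) = A s + vecMulVec (v (s + 1)) (v (s + 1)))
    (hv : ∀ s, v s ⬝ᵥ v s ≤ G ^ 2) {T : ℕ} (hT : 1 ≤ T) :
    Real.log (A T).det - Real.log (A 0).det
      ≤ Fintype.card ι * (Real.log (Fintype.card ι * ε + G ^ 2) - Real.log ε)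
        + Fintype.card ι * Real.log T := by
  have htrace : ∀ t, (A t).trace ≤ Fintype.card ι * ε + t * G ^ 2 := by
    intro t
    induction t with
    | zero => simp [h₀, trace_smul, mul_comm]
    | succ t ih =>
      rw [hA, trace_add, trace_vecMulVec]
      push_cast
      linarith [hv (t + 1)]
  set c : ℝ := (Fintype.card ι : ℝ)
  have hT' : (1 : ℝ) ≤ T := by exact_mod_cast hT
  have hAT := posDef_of_succ_eq_add_vecMulVec (by rw [h₀]; exact .smul .one hε) hA T
  have hdet : (A T).det ≤ ((c * ε + G ^ 2) * T) ^ Fintype.card ι := by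
    refine hAT.posSemidef.det_le_trace_pow.trans
      (pow_le_pow_left₀ hAT.posSemidef.trace_nonneg ?_ _)
    nlinarith [htrace T, mul_le_mul_of_nonneg_left hT' (by positivity : 0 ≤ c * ε)]
  have hlog_mul :
      c * Real.log ((c * ε + G ^ 2) * T) ≤ c * Real.log (c * ε + G ^ 2) + c * Real.log T := by
    rcases (show (0 : ℝ) ≤ c by positivity).eq_or_lt with hc | hc
    · simp [← hc]
    · rw [Real.log_mul (by positivity) (by positivity), mul_add]
  have hlog := Real.log_le_log hAT.det_pos hdet
  rw [Real.log_pow] at hlog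
  rw [h₀, det_smul, det_one, mul_one, Real.log_pow]
  linarith

end Matrix

theorem regret_step_le_potential_drop {ι : Type*} [Fintype ι] [DecidableEq ι]
    {M : Matrix ι ι ℝ} (hM : M.PosDef) {η : ℝ} (hη : 0 < η) {g p q x : ι → ℝ} {Δf Δr : ℝ}
    (hf : Δf ≤ g ⬝ᵥ (q - x) - η / 2 * (g ⬝ᵥ (q - x)) ^ 2)
    (hr : Δr ≤ g ⬝ᵥ (x - p) + η * ((p - q) ⬝ᵥ (M + vecMulVec g g) *ᵥ (x - p))) :
    Δf + Δr ≤ η / 2 * ((x - q) ⬝ᵥ M *ᵥ (x - q))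
      - η / 2 * ((x - p) ⬝ᵥ (M + vecMulVec g g) *ᵥ (x - p))
      + (Real.log (M + vecMulVec g g).det - Real.log M.det) / (2 * η) := by
  set N := M + vecMulVec g g with hN_def
  have hN : N.PosDef := hM.add_vecMulVec_self g
  have hrank_one : (x - q) ⬝ᵥ N *ᵥ (x - q) = (x - q) ⬝ᵥ M *ᵥ (x - q) + (g ⬝ᵥ (q - x)) ^ 2 := by
    have hneg : g ⬝ᵥ (x - q) = -(g ⬝ᵥ (q - x)) := by rw [← dotProduct_neg, neg_sub]
    rw [hN_def, add_mulVec, dotProduct_add, vecMulVec_mulVec, op_smul_eq_smul, dotProduct_smul,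
      smul_eq_mul, dotProduct_comm (x - q) g, hneg]
    ring
  have hsplit : (x - q) ⬝ᵥ N *ᵥ (x - q) = (p - q) ⬝ᵥ N *ᵥ (p - q)
      + 2 * ((p - q) ⬝ᵥ N *ᵥ (x - p)) + (x - p) ⬝ᵥ N *ᵥ (x - p) := by
    have := hN.isHermitian.dotProduct_mulVec_add_smul (p - q) (x - p) 1
    rw [one_smul, sub_add_sub_cancel'] at this
    rw [this]
    ring
  have hlin : g ⬝ᵥ (q - x) + g ⬝ᵥ (x - p) = -(g ⬝ᵥ (p - q)) := by
    simp only [dotProduct_sub]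
    ring
  have hsquare := hN.neg_dotProduct_sub_le hη g (p - q)
  have hdet : g ⬝ᵥ N⁻¹ *ᵥ g / (2 * η) ≤ (Real.log N.det - Real.log M.det) / (2 * η) := by
    gcongr
    exact hM.dotProduct_inv_mulVec_le_log_det_sub g
  linear_combination hf + hr + hsquare + hdet + hlin + η / 2 * hrank_one - η / 2 * hsplit

theorem ExpConcaveOn.online_newton_step_le {ι : Type*} [Fintype ι] [DecidableEq ι]
    {B : Set (ι → ℝ)} {f c : (ι → ℝ) → ℝ} {α η : ℝ} (hf : ExpConcaveOn α B f)
    (hc : ConvexOn ℝ B c) (hη : 0 < η) (hηα : 2 * η ≤ α) {M N : Matrix ι ι ℝ} (hM : M.PosDef)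
    {g q p x : ι → ℝ} (hN : N = M + vecMulVec g g) (hq : q ∈ B) (hp : p ∈ B) (hx : x ∈ B)
    {L : (ι → ℝ) →L[ℝ] ℝ} (hL : HasFDerivAt f L q) (hLg : ∀ y, L y = g ⬝ᵥ y)
    (hsmall : |2 * η * (g ⬝ᵥ (q - x))| ≤ 1 / 4)
    (hmin : ∀ u ∈ B, g ⬝ᵥ (p - q) + c p + η * (1 / 2 * ((p - q) ⬝ᵥ N *ᵥ (p - q)))
      ≤ g ⬝ᵥ (u - q) + c u + η * (1 / 2 * ((u - q) ⬝ᵥ N *ᵥ (u - q)))) :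
    f q + c p - f x - c x ≤ η / 2 * ((x - q) ⬝ᵥ M *ᵥ (x - q))
      - η / 2 * ((x - p) ⬝ᵥ N *ᵥ (x - p)) + (Real.log N.det - Real.log M.det) / (2 * η) := by
  have hloss : f q - f x ≤ g ⬝ᵥ (q - x) - η / 2 * (g ⬝ᵥ (q - x)) ^ 2 := by
    have := hf.sub_le_sub_sq (by positivity) hηα hx hq hL (by rwa [hLg])
    rw [hLg] at this
    linarith
  have hprox : c p - c x ≤ g ⬝ᵥ (x - p) + η * ((p - q) ⬝ᵥ N *ᵥ (x - p)) := by
    have hN' : N.IsHermitian := hN ▸ (hM.add_vecMulVec_self g).isHermitian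
    have hopt := hc.le_add_of_isMinOn_add (φ := fun y =>
        g ⬝ᵥ (y - q) + η * (1 / 2 * ((y - q) ⬝ᵥ N *ᵥ (y - q)))) hp hx
      (isMinOn_iff.2 fun u hu => by simp only [Pi.add_apply]; linarith [hmin u hu])
      (ℓ := g ⬝ᵥ (x - p) + η * ((p - q) ⬝ᵥ N *ᵥ (x - p)))
      (k := η / 2 * ((x - p) ⬝ᵥ N *ᵥ (x - p))) fun s => by
        rw [show p + s • (x - p) - q = (p - q) + s • (x - p) by abel,
          hN'.dotProduct_mulVec_add_smul, dotProduct_add, dotProduct_smul, smul_eq_mul]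
        ring
    linarith
  subst hN
  linarith [regret_step_le_potential_drop hM hη hloss hprox]

theorem Finset.sum_Icc_le_sub_of_le_sub {x ρ Φ : ℕ → ℝ} (hρ₁ : ρ 1 = 0) (hρ : ∀ t, 0 ≤ ρ t)
    (hstep : ∀ s, x (s + 1) + (ρ (s + 2) - ρ (s + 1)) ≤ Φ s - Φ (s + 1)) (T : ℕ) :
    ∑ t ∈ Icc 1 T, x t ≤ Φ 0 - Φ T := by
  suffices h : ∑ t ∈ Icc 1 T, x t + ρ (T + 1) ≤ Φ 0 - Φ T by linarith [hρ (T + 1)]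
  induction T with
  | zero => simp [hρ₁]
  | succ T ih =>
    rw [sum_Icc_succ_top (by omega)]
    linarith [hstep T]

section OnlineNewton

variable {ι : Type*} [Fintype ι] {B : Set (ι → ℝ)} {f : ℕ → (ι → ℝ) → ℝ} {c : (ι → ℝ) → ℝ}
  {g w : ℕ → ι → ℝ} {α : ℝ}

theorem sum_regret_nonpos_of_dotProduct_sub_eq_zero (hf : ∀ t, ExpConcaveOn α B (f t))
    (hα : 0 < α) (hc₀ : ∀ x ∈ B, 0 ≤ c x) (hc₁ : c (w 1) = 0) (hw : ∀ t, w t ∈ B)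
    (hgrad : ∀ t, ∃ L : (ι → ℝ) →L[ℝ] ℝ, HasFDerivAt (f t) L (w t) ∧ ∀ y, L y = g t ⬝ᵥ y)
    (horth : ∀ t, ∀ x ∈ B, ∀ y ∈ B, g t ⬝ᵥ (x - y) = 0)
    (hmin : ∀ t, 1 ≤ t → ∀ u ∈ B, g t ⬝ᵥ (w (t + 1) - w t) + c (w (t + 1))
      ≤ g t ⬝ᵥ (u - w t) + c u)
    {x : ι → ℝ} (hx : x ∈ B) (T : ℕ) :
    ∑ t ∈ Icc 1 T, (f t (w t) + c (w t) - f t x - c x) ≤ 0 := by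
  refine (Finset.sum_Icc_le_sub_of_le_sub (Φ := 0) hc₁ (fun t => hc₀ _ (hw t)) (fun s => ?_)
    T).trans_eq (sub_self _)
  obtain ⟨L, hL, hLg⟩ := hgrad (s + 1)
  have hloss := (hf (s + 1)).sub_le hα hx (hw _) hL
  rw [hLg, horth _ _ (hw _) _ hx] at hloss
  have hprox := hmin (s + 1) (by omega) x hx
  rw [horth _ _ (hw _) _ (hw _), horth _ _ hx _ (hw _)] at hprox
  simp only [Pi.zero_apply]
  linarith

variable [DecidableEq ι] {A : ℕ → Matrix ι ι ℝ} {η ε D G : ℝ}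

theorem online_newton_regret_le (hf : ∀ t, ExpConcaveOn α B (f t)) (hc : ConvexOn ℝ B c)
    (hc₀ : ∀ x ∈ B, 0 ≤ c x) (hc₁ : c (w 1) = 0) (hη : 0 < η) (hηα : 2 * η ≤ α) (hε : 0 < ε)
    (hw : ∀ t, w t ∈ B) (hD : ∀ x ∈ B, ∀ y ∈ B, (x - y) ⬝ᵥ (x - y) ≤ D ^ 2)
    (hG : ∀ t, g t ⬝ᵥ g t ≤ G ^ 2)
    (hgrad : ∀ t, ∃ L : (ι → ℝ) →L[ℝ] ℝ, HasFDerivAt (f t) L (w t) ∧ ∀ y, L y = g t ⬝ᵥ y)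
    (hsmall : ∀ t, ∀ x ∈ B, |2 * η * (g t ⬝ᵥ (w t - x))| ≤ 1 / 4)
    (hA₀ : A 0 = ε • 1) (hA : ∀ s, A (s + 1) = A s + vecMulVec (g (s + 1)) (g (s + 1)))
    (hmin : ∀ t, 1 ≤ t → ∀ u ∈ B,
      g t ⬝ᵥ (w (t + 1) - w t) + c (w (t + 1))
          + η * (1 / 2 * ((w (t + 1) - w t) ⬝ᵥ A t *ᵥ (w (t + 1) - w t)))
        ≤ g t ⬝ᵥ (u - w t) + c u + η * (1 / 2 * ((u - w t) ⬝ᵥ A t *ᵥ (u - w t))))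
    {x : ι → ℝ} (hx : x ∈ B) {T : ℕ} (hT : 1 ≤ T) :
    ∑ t ∈ Icc 1 T, (f t (w t) + c (w t) - f t x - c x)
      ≤ Fintype.card ι / (2 * η) * Real.log T + (η / 2 * ε * D ^ 2
        + Fintype.card ι * (Real.log (Fintype.card ι * ε + G ^ 2) - Real.log ε) / (2 * η)) := by
  have hApos := posDef_of_succ_eq_add_vecMulVec (hA₀ ▸ .smul .one hε) hA
  set Φ : ℕ → ℝ := fun s => η / 2 * ((x - w (s + 1)) ⬝ᵥ A s *ᵥ (x - w (s + 1)))
    - Real.log (A s).det / (2 * η)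
  have hstep : ∀ s, f (s + 1) (w (s + 1)) + c (w (s + 1)) - f (s + 1) x - c x
      + (c (w (s + 2)) - c (w (s + 1))) ≤ Φ s - Φ (s + 1) := fun s => by
    obtain ⟨L, hL, hLg⟩ := hgrad (s + 1)
    have := (hf (s + 1)).online_newton_step_le hc hη hηα (hApos s) (hA s) (hw _) (hw _) hx hL
      hLg (hsmall _ _ hx) (hmin (s + 1) (by omega))
    simp only [Φ]
    linarith [sub_div (Real.log (A (s + 1)).det) (Real.log (A s).det) (2 * η)]
  have hΦ₀ : η / 2 * ((x - w 1) ⬝ᵥ A 0 *ᵥ (x - w 1)) ≤ η / 2 * ε * D ^ 2 := by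
    rw [hA₀, smul_mulVec, one_mulVec, dotProduct_smul, smul_eq_mul, mul_assoc]
    gcongr
    exact hD _ hx _ (hw 1)
  have hΦT : 0 ≤ (x - w (T + 1)) ⬝ᵥ A T *ᵥ (x - w (T + 1)) := by
    simpa using (hApos T).posSemidef.dotProduct_mulVec_nonneg (x - w (T + 1))
  have hpot := div_le_div_of_nonneg_right
    (log_det_sub_le_of_succ_eq_add_vecMulVec hε hA₀ hA hG hT) (by positivity : 0 ≤ 2 * η)
  calc _ ≤ Φ 0 - Φ T := Finset.sum_Icc_le_sub_of_le_sub hc₁ (fun t => hc₀ _ (hw t)) hstep T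
    _ ≤ _ := by
      simp only [Φ, zero_add]
      rw [add_div, mul_div_right_comm _ (Real.log T)] at hpot
      linarith [mul_nonneg (by positivity : 0 ≤ η / 2) hΦT,
        sub_div (Real.log (A T).det) (Real.log (A 0).det) (2 * η)]

end OnlineNewton

theorem stmt5_general {n : ℕ} (B : Set (Fin n → ℝ))
    (f : ℕ → (Fin n → ℝ) → ℝ) (r : (Fin n → ℝ) → ℝ)
    (gradf : ℕ → (Fin n → ℝ) → (Fin n → ℝ))
    (α D G η ε lam : ℝ) (hα : 0 < α) (hlam : 0 ≤ lam)
    (hexp : ∀ t, ConcaveOn ℝ B (fun x => Real.exp (-α * f t x)))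
    (hdiam : ∀ x ∈ B, ∀ y ∈ B, Real.sqrt ((x - y) ⬝ᵥ (x - y)) ≤ D)
    (hgrad : ∀ t, ∀ x ∈ B, ∃ L : (Fin n → ℝ) →L[ℝ] ℝ,
      HasFDerivAt (f t) L x ∧ ∀ y, L y = gradf t x ⬝ᵥ y)
    (hG : ∀ t, ∀ x ∈ B, Real.sqrt (gradf t x ⬝ᵥ gradf t x) ≤ G)
    (hη : η = (1/2) * min α (1/(4*G*D))) (hε : ε = 1/(η^2 * D^2))
    (hr : ConvexOn ℝ B r) (hr0 : ∀ x ∈ B, 0 ≤ r x)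
    (w : ℕ → (Fin n → ℝ)) (hw : ∀ t, w t ∈ B) (hr1 : r (w 1) = 0)
    (A : ℕ → Matrix (Fin n) (Fin n) ℝ)
    (hA0 : A 0 = ε • (1 : Matrix (Fin n) (Fin n) ℝ))
    (hA : ∀ t : ℕ, 1 ≤ t →
      A t = A (t-1) + Matrix.vecMulVec (gradf t (w t)) (gradf t (w t)))
    (hmin : ∀ t : ℕ, 1 ≤ t → ∀ u ∈ B,
      gradf t (w t) ⬝ᵥ (w (t+1) - w t) + lam * r (w (t+1))
          + η * ((1/2) * ((w (t+1) - w t) ⬝ᵥ (A t).mulVec (w (t+1) - w t)))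
        ≤ gradf t (w t) ⬝ᵥ (u - w t) + lam * r u
          + η * ((1/2) * ((u - w t) ⬝ᵥ (A t).mulVec (u - w t)))) :
    ∃ C C' : ℝ, ∀ wstar ∈ B, ∀ T : ℕ, 1 ≤ T →
      ∑ t ∈ Finset.Icc 1 T, (f t (w t) + lam * r (w t) - f t wstar - lam * r wstar)
        ≤ C * Real.log T + C' := by
  have hG₀ : 0 ≤ G := (Real.sqrt_nonneg _).trans (hG 1 _ (hw 1))
  have hD₀ : 0 ≤ D := (Real.sqrt_nonneg _).trans (hdiam _ (hw 1) _ (hw 1))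
  have hgD : ∀ t, ∀ x ∈ B, ∀ y ∈ B, |gradf t (w t) ⬝ᵥ (x - y)| ≤ G * D := fun t x hx y hy =>
    abs_dotProduct_le_of_sqrt_le (hG t _ (hw t)) (hdiam x hx y hy)
  have hc₀ : ∀ x ∈ B, 0 ≤ lam * r x := fun x hx => mul_nonneg hlam (hr0 x hx)
  have hc₁ : lam * r (w 1) = 0 := by rw [hr1, mul_zero]
  have hgrad' := fun t => hgrad t _ (hw t)
  rcases (mul_nonneg hG₀ hD₀).eq_or_lt with hGD | hGD
  · have hη₀ : η = 0 := by rw [hη, mul_assoc 4, ← hGD]; simp [hα.le]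
    refine ⟨0, 0, fun wstar hws T _ => ?_⟩
    rw [zero_mul, zero_add]
    exact sum_regret_nonpos_of_dotProduct_sub_eq_zero (c := fun x => lam * r x) hexp hα hc₀ hc₁
      hw hgrad' (fun t x hx y hy => abs_nonpos_iff.1 (hGD ▸ hgD t x hx y hy))
      (fun t ht u hu => by simpa [hη₀] using hmin t ht u hu) hws T
  have hη₀ : 0 < η := by
    rw [hη]; exact mul_pos one_half_pos (lt_min hα (one_div_pos.2 (by linarith)))
  have hηα : 2 * η ≤ α := by rw [hη]; linarith [min_le_left α (1 / (4 * G * D))]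
  have hηGD : 2 * η * (G * D) ≤ 1 / 4 := by
    rw [hη, ← le_div_iff₀ hGD]
    linarith [min_le_right α (1 / (4 * G * D)), show 1 / (4 * G * D) = 1 / 4 / (G * D) by ring]
  have hsmall : ∀ t, ∀ x ∈ B, |2 * η * (gradf t (w t) ⬝ᵥ (w t - x))| ≤ 1 / 4 := fun t x hx => by
    rw [abs_mul, abs_of_pos (by linarith)]
    nlinarith [hgD t _ (hw t) x hx]
  have hε₀ : 0 < ε := by
    have hD : 0 < D := pos_of_mul_pos_right hGD hG₀
    rw [hε]; positivity
  exact ⟨_, _, fun wstar hws T hT => online_newton_regret_le (c := fun x => lam * r x) hexp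
    (hr.smul hlam) hc₀ hc₁ hη₀ hηα hε₀ hw
    (fun x hx y hy => (Real.sqrt_le_iff.1 (hdiam x hx y hy)).2)
    (fun t => (Real.sqrt_le_iff.1 (hG t _ (hw t))).2) hgrad' hsmall hA0
    (fun s => by simpa using hA (s + 1) (by omega)) hmin hws hT⟩

theorem stmt5 {n : ℕ} (B : Set (Fin n → ℝ)) (hB : Convex ℝ B)
    (f : ℕ → (Fin n → ℝ) → ℝ) (r : (Fin n → ℝ) → ℝ)
    (gradf : ℕ → (Fin n → ℝ) → (Fin n → ℝ))
    (α D G η ε lam Rbound : ℝ) (hα : 0 < α) (hlam : 0 ≤ lam)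
    (hexp : ∀ t, ConcaveOn ℝ B (fun x => Real.exp (-α * f t x)))
    (hdiam : ∀ x ∈ B, ∀ y ∈ B, Real.sqrt ((x - y) ⬝ᵥ (x - y)) ≤ D)
    (hgrad : ∀ t, ∀ x ∈ B, ∃ L : (Fin n → ℝ) →L[ℝ] ℝ,
      HasFDerivAt (f t) L x ∧ ∀ y, L y = gradf t x ⬝ᵥ y)
    (hG : ∀ t, ∀ x ∈ B, Real.sqrt (gradf t x ⬝ᵥ gradf t x) ≤ G)
    (hη : η = (1/2) * min α (1/(4*G*D))) (hε : ε = 1/(η^2 * D^2))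
    (hr : ConvexOn ℝ B r) (hr0 : ∀ x ∈ B, 0 ≤ r x) (hrbd : ∀ x ∈ B, r x ≤ Rbound)
    (w : ℕ → (Fin n → ℝ)) (hw : ∀ t, w t ∈ B) (hr1 : r (w 1) = 0)
    (A : ℕ → Matrix (Fin n) (Fin n) ℝ)
    (hA0 : A 0 = ε • (1 : Matrix (Fin n) (Fin n) ℝ))
    (hA : ∀ t : ℕ, 1 ≤ t →
      A t = A (t-1) + Matrix.vecMulVec (gradf t (w t)) (gradf t (w t)))
    (hmin : ∀ t : ℕ, 1 ≤ t → ∀ u ∈ B,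
      gradf t (w t) ⬝ᵥ (w (t+1) - w t) + lam * r (w (t+1))
          + η * ((1/2) * ((w (t+1) - w t) ⬝ᵥ (A t).mulVec (w (t+1) - w t)))
        ≤ gradf t (w t) ⬝ᵥ (u - w t) + lam * r u
          + η * ((1/2) * ((u - w t) ⬝ᵥ (A t).mulVec (u - w t)))) :
    ∃ C C' : ℝ, ∀ wstar ∈ B, ∀ T : ℕ, 1 ≤ T →
      ∑ t ∈ Finset.Icc 1 T, (f t (w t) + lam * r (w t) - f t wstar - lam * r wstar)
        ≤ C * Real.log T + C' :=
  stmt5_general B f r gradf α D G η ε lam hα hlam hexp hdiam hgrad hG hη hε hr hr0 w hw hr1 A hA0 hA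
    hmin
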